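/- Let G be an abelian topological group of the form ℝ^d × 𝕋^ℓ × D with D countable discrete, let H be a lattice in ℝ^m × G, and for r ∈ D let H_r be the set of elements of H whose D-coordinate equals r. Then H_0 is a lattice in ℝ^m × ℝ^d × 𝕋^ℓ × {0}, and for every r with H_r nonempty, H_r is a coset (translate) of H_0. -/

import Mathlib

/-!
Since `D` is discrete, `Y = ℝ^m × ℝ^d × 𝕋^ℓ × {0}` is an open subgroup and `H₀ = H ∩ Y`.
A subgroup of the discrete group `H` is discrete. As `Y` is open, `Y ⧸ H₀ → X ⧸ H` is an open
embedding; its image is an open, hence closed, subgroup of the compact group `X ⧸ H`, so `Y ⧸ H₀`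
is compact. Finally the fibres `H_r` are the cosets of the kernel `H₀` of the projection
`H → D`.
-/

open Topology

namespace AddSubgroup

variable {X : Type*} [AddCommGroup X] [TopologicalSpace X]

theorem discreteTopology_comap_subtype (H Y : AddSubgroup X) [DiscreteTopology H] :
    DiscreteTopology (H.comap Y.subtype) :=
  .of_continuous_injective (f := fun k => (⟨k.1, k.2⟩ : H)) (by fun_prop)
    fun a b hab => Subtype.ext (Subtype.ext (congrArg (fun h : H => (h : X)) hab))

variable [IsTopologicalAddGroup X] (H : AddSubgroup X) {Y : AddSubgroup X}

theorem isOpenEmbedding_quotientMap_subtype (hY : IsOpen (Y : Set X)) :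
    IsOpenEmbedding (QuotientAddGroup.map (H.comap Y.subtype) H Y.subtype le_rfl) := by
  set f := QuotientAddGroup.map (H.comap Y.subtype) H Y.subtype le_rfl
  have hf_mk : ∀ y : Y, f y = ((y : X) : X ⧸ H) := fun _ => rfl
  refine .of_continuous_injective_isOpenMap ?_ ?_ ?_
  · rw [(QuotientAddGroup.isQuotientMap_mk _).continuous_iff]
    exact QuotientAddGroup.continuous_mk.comp continuous_subtype_val
  · rw [injective_iff_map_eq_zero]
    intro q
    induction q using QuotientAddGroup.induction_on with | H y =>
    simp only [hf_mk, QuotientAddGroup.eq_zero_iff]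
    exact id
  · intro U hU
    have hU_eq : f '' U = (↑) '' (Subtype.val '' ((↑) ⁻¹' U : Set Y)) := by
      conv_lhs => rw [← Set.image_preimage_eq U QuotientAddGroup.mk_surjective]
      rw [Set.image_image, Set.image_image]
      rfl
    rw [hU_eq]
    exact QuotientAddGroup.isOpenMap_coe _
      (hY.isOpenMap_subtype_val _ (hU.preimage QuotientAddGroup.continuous_mk))

theorem compactSpace_quotient_comap_subtype [CompactSpace (X ⧸ H)] (hY : IsOpen (Y : Set X)) :
    CompactSpace (Y ⧸ H.comap Y.subtype) := by
  have hf := H.isOpenEmbedding_quotientMap_subtype hY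
  -- The range is an open subgroup of `X ⧸ H`, hence closed.
  have hrange : IsClosed
      (Set.range (QuotientAddGroup.map (H.comap Y.subtype) H Y.subtype le_rfl)) :=
    isClosed_of_isOpen (AddMonoidHom.range _) hf.isOpen_range
  exact IsClosedEmbedding.compactSpace ⟨hf.isEmbedding, hrange⟩

end AddSubgroup

theorem AddSubgroup.fiber_eq_add_fiber_zero {X D : Type*} [AddCommGroup X] [AddGroup D]
    (H : AddSubgroup X) (p : X →+ D) {x : X} (hx : x ∈ H) :
    {z | z ∈ H ∧ p z = p x} = (x + ·) '' {z | z ∈ H ∧ p z = 0} := by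
  ext z
  constructor
  · rintro ⟨hz, hpz⟩
    exact ⟨z - x, ⟨H.sub_mem hz hx, by rw [map_sub, hpz, sub_self]⟩, add_sub_cancel x z⟩
  · rintro ⟨w, ⟨hw, hpw⟩, rfl⟩
    exact ⟨H.add_mem hx hw, by rw [map_add, hpw, add_zero]⟩

theorem lattice_fiber_structure_general
    {D : Type*} [AddCommGroup D] [TopologicalSpace D] [DiscreteTopology D]
    (m d ℓ : ℕ)
    (H : AddSubgroup ((Fin m → ℝ) × (Fin d → ℝ) × (Fin ℓ → AddCircle (1 : ℝ)) × D))
    [DiscreteTopology H]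
    (hcocompact : CompactSpace
      (((Fin m → ℝ) × (Fin d → ℝ) × (Fin ℓ → AddCircle (1 : ℝ)) × D) ⧸ H))
    (Y : AddSubgroup ((Fin m → ℝ) × (Fin d → ℝ) × (Fin ℓ → AddCircle (1 : ℝ)) × D))
    (hY : (Y : Set ((Fin m → ℝ) × (Fin d → ℝ) × (Fin ℓ → AddCircle (1 : ℝ)) × D)) =
      {x | x.2.2.2 = 0}) :
    (DiscreteTopology (H.comap Y.subtype) ∧ CompactSpace (Y ⧸ H.comap Y.subtype)) ∧
      ∀ r : D, (∃ x ∈ H, x.2.2.2 = r) →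
        ∃ h₀ ∈ H, h₀.2.2.2 = r ∧
          {x | x ∈ H ∧ x.2.2.2 = r} = (fun y => h₀ + y) '' {x | x ∈ H ∧ x.2.2.2 = 0} := by
  have hY_open :
      IsOpen (Y : Set ((Fin m → ℝ) × (Fin d → ℝ) × (Fin ℓ → AddCircle (1 : ℝ)) × D)) := by
    rw [hY]
    exact (isOpen_discrete {0}).preimage continuous_snd.snd.snd
  refine ⟨⟨H.discreteTopology_comap_subtype Y, H.compactSpace_quotient_comap_subtype hY_open⟩,
    ?_⟩
  rintro r ⟨x, hxH, rfl⟩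
  let p : (Fin m → ℝ) × (Fin d → ℝ) × (Fin ℓ → AddCircle (1 : ℝ)) × D →+ D :=
    (AddMonoidHom.snd _ _).comp ((AddMonoidHom.snd _ _).comp (AddMonoidHom.snd _ _))
  exact ⟨x, hxH, rfl, H.fiber_eq_add_fiber_zero p hxH⟩

/-- If `H` is a lattice in `ℝ^m × ℝ^d × 𝕋^ℓ × D` with `D` countable discrete, then
`H₀` (elements of `H` with `D`-coordinate `0`) is a lattice in the subgroup
`ℝ^m × ℝ^d × 𝕋^ℓ × {0}`, and every nonempty fiber `H_r` is a translate of `H₀`. -/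
theorem lattice_fiber_structure
    {D : Type*} [AddCommGroup D] [TopologicalSpace D] [DiscreteTopology D] [Countable D]
    (m d ℓ : ℕ)
    (H : AddSubgroup ((Fin m → ℝ) × (Fin d → ℝ) × (Fin ℓ → AddCircle (1 : ℝ)) × D))
    [DiscreteTopology H]
    (hcocompact : CompactSpace
      (((Fin m → ℝ) × (Fin d → ℝ) × (Fin ℓ → AddCircle (1 : ℝ)) × D) ⧸ H))
    (Y : AddSubgroup ((Fin m → ℝ) × (Fin d → ℝ) × (Fin ℓ → AddCircle (1 : ℝ)) × D))
    (hY : (Y : Set ((Fin m → ℝ) × (Fin d → ℝ) × (Fin ℓ → AddCircle (1 : ℝ)) × D)) =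
      {x | x.2.2.2 = 0}) :
    (DiscreteTopology (H.comap Y.subtype) ∧ CompactSpace (Y ⧸ H.comap Y.subtype)) ∧
      ∀ r : D, (∃ x ∈ H, x.2.2.2 = r) →
        ∃ h₀ ∈ H, h₀.2.2.2 = r ∧
          {x | x ∈ H ∧ x.2.2.2 = r} = (fun y => h₀ + y) '' {x | x ∈ H ∧ x.2.2.2 = 0} :=
  lattice_fiber_structure_general m d ℓ H hcocompact Y hY
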